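/- arXiv:1105.6122 — 4 statements merged into one kernel-verified Lean document; each statement's English description precedes it below -/
import Mathlib

section
/- For real r ≠ ±1 and s ≠ ±1 with rs ≠ 1, the inequality Φ(rs) ≤ Φ̃(r) + Φ̃(s) holds, where Φ(r) = (1/2)·((r+1)/(r-1))·log(r²) and Φ̃(r) = (1/2)·((r²+1)/(r²-1))·log(r²). Equality holds if and only if r = s. -/
open Real

/-- Φ(r) = (1/2)·((r+1)/(r-1))·log(r²), with limiting value Φ(1) = 2. -/
noncomputable def Phi (r : ℝ) : ℝ :=
  if r = 1 then 2 else (1 / 2) * ((r + 1) / (r - 1)) * Real.log (r ^ 2)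

/-- Φ̃(r) = (1/2)·((r²+1)/(r²-1))·log(r²), with limiting values Φ̃(±1) = 1. -/
noncomputable def PhiTilde (r : ℝ) : ℝ :=
  if r = 1 ∨ r = -1 then 1 else (1 / 2) * ((r ^ 2 + 1) / (r ^ 2 - 1)) * Real.log (r ^ 2)

/-!
With `g x = x log (x²) / (x² - 1)` (`logRatio`) one has, for nonzero `r, s`,
`Φ̃ r + Φ̃ s - Φ (r s) = (g r - g s) (s - r) (r s - 1) / (r s - 1)²`.
The function `g` is odd and `g (exp t) = t / sinh t`, which is even in `t` and strictly
decreasing in `|t|` (because `sinh t < t cosh t` for `t > 0`). Comparing `|log r|` with `|log s|`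
this gives `sign (g r - g s) = sign ((s - r) (r s - 1))`, so the quotient is positive unless
`r = s`. When `r = 0` or `s = 0` the factorisation fails (`log 0 = 0`), but then
`Φ (r s) = Φ̃ 0 = 0` and `Φ̃` is positive at the other argument.
-/

open Set

theorem StrictMonoOn.sign_sub {α β : Type*} [AddCommGroup α] [LinearOrder α]
    [IsOrderedAddMonoid α] [AddCommGroup β] [LinearOrder β] [IsOrderedAddMonoid β]
    {f : α → β} {s : Set α} (hf : StrictMonoOn f s) {a b : α} (ha : a ∈ s) (hb : b ∈ s) :
    SignType.sign (f a - f b) = SignType.sign (a - b) := by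
  rcases lt_trichotomy a b with h | rfl | h
  · rw [sign_neg (sub_neg.2 (hf ha hb h)), sign_neg (sub_neg.2 h)]
  · simp
  · rw [sign_pos (sub_pos.2 (hf hb ha h)), sign_pos (sub_pos.2 h)]

theorem StrictAntiOn.sign_sub {α β : Type*} [AddCommGroup α] [LinearOrder α]
    [IsOrderedAddMonoid α] [AddCommGroup β] [LinearOrder β] [IsOrderedAddMonoid β]
    {f : α → β} {s : Set α} (hf : StrictAntiOn f s) {a b : α} (ha : a ∈ s) (hb : b ∈ s) :
    SignType.sign (f a - f b) = SignType.sign (b - a) := by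
  rcases lt_trichotomy a b with h | rfl | h
  · rw [sign_pos (sub_pos.2 (hf ha hb h)), sign_pos (sub_pos.2 h)]
  · simp
  · rw [sign_neg (sub_neg.2 (hf hb ha h)), sign_neg (sub_neg.2 h)]

theorem mul_pos_of_sign_eq {α : Type*} [Ring α] [LinearOrder α] [IsStrictOrderedRing α]
    {x y : α} (h : SignType.sign x = SignType.sign y) (hy : y ≠ 0) : 0 < x * y := by
  rcases hy.lt_or_gt with hy | hy
  · exact mul_pos_of_neg_of_neg (sign_eq_neg_one_iff.1 (h.trans (sign_neg hy))) hy
  · exact mul_pos (sign_eq_one_iff.1 (h.trans (sign_pos hy))) hy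

theorem Real.sinh_lt_mul_cosh {t : ℝ} (ht : 0 < t) : sinh t < t * cosh t := by
  have hmono : StrictMonoOn (fun t => t * cosh t - sinh t) (Ici 0) := by
    refine strictMonoOn_of_deriv_pos (convex_Ici 0) (by fun_prop) fun x hx => ?_
    rw [interior_Ici, mem_Ioi] at hx
    have : deriv (fun t => t * cosh t - sinh t) x = x * sinh x := by
      have := ((hasDerivAt_id' (x := x)).fun_mul (hasDerivAt_cosh x)).fun_sub (hasDerivAt_sinh x)
      rw [this.deriv]; simp
    rw [this]; exact mul_pos hx (sinh_pos_iff.2 hx)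
  simpa using hmono self_mem_Ici ht.le ht

theorem Real.strictAntiOn_div_sinh : StrictAntiOn (fun t => t / sinh t) (Ioi 0) := by
  refine strictAntiOn_of_deriv_neg (convex_Ioi 0) ?_ fun x hx => ?_
  · exact fun x hx => (continuousAt_id.div continuous_sinh.continuousAt
      (sinh_pos_iff.2 hx).ne').continuousWithinAt
  rw [interior_Ioi, mem_Ioi] at hx
  have hsinh := sinh_pos_iff.2 hx
  rw [((hasDerivAt_id' (x := x)).fun_div (hasDerivAt_sinh x) hsinh.ne').deriv]
  exact div_neg_of_neg_of_pos (by simpa using sinh_lt_mul_cosh hx) (by positivity)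

theorem Real.div_sinh_abs (t : ℝ) : |t| / sinh |t| = t / sinh t := by
  rcases abs_cases t with ⟨h, _⟩ | ⟨h, _⟩ <;> simp [h, neg_div_neg_eq]

theorem Real.log_div_sub_one_pos {y : ℝ} (h0 : 0 < y) (h1 : y ≠ 1) : 0 < log y / (y - 1) := by
  rcases h1.lt_or_gt with h | h
  · exact div_pos_of_neg_of_neg (log_neg h0 h) (by linarith)
  · exact div_pos (log_pos h) (by linarith)

noncomputable def logRatio (x : ℝ) : ℝ := x * log (x ^ 2) / (x ^ 2 - 1)

theorem logRatio_neg (x : ℝ) : logRatio (-x) = -logRatio x := by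
  simp [logRatio, neg_div]

theorem logRatio_exp (t : ℝ) : logRatio (exp t) = t / sinh t := by
  rcases eq_or_ne t 0 with rfl | ht
  · simp [logRatio]
  have hlog : log (exp t ^ 2) = 2 * t := by
    rw [log_pow, log_exp]; norm_num
  have hden : exp t ^ 2 - 1 ≠ 0 := by
    rw [sub_ne_zero, ← exp_nat_mul]; simpa using ht
  rw [logRatio, hlog, sinh_eq, exp_neg]
  field_simp

theorem logRatio_pos {x : ℝ} (h0 : 0 < x) (h1 : x ≠ 1) : 0 < logRatio x := by
  rw [logRatio, mul_div_assoc]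
  exact mul_pos h0 (log_div_sub_one_pos (by positivity) (by simp [h1, (by linarith : x ≠ -1)]))

theorem sign_logRatio_sub_of_pos {r s : ℝ} (hr : 0 < r) (hs : 0 < s) (hr1 : r ≠ 1)
    (hs1 : s ≠ 1) : SignType.sign (logRatio r - logRatio s) =
      SignType.sign ((s - r) * (r * s - 1)) := by
  obtain ⟨a, rfl⟩ : ∃ a, exp a = r := ⟨log r, exp_log hr⟩
  obtain ⟨b, rfl⟩ : ∃ b, exp b = s := ⟨log s, exp_log hs⟩
  have ha : 0 < |a| := abs_pos.2 fun h => by simp [h] at hr1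
  have hb : 0 < |b| := abs_pos.2 fun h => by simp [h] at hs1
  have hexp := exp_strictMono.strictMonoOn univ
  calc SignType.sign (logRatio (exp a) - logRatio (exp b))
      = SignType.sign (|b| - |a|) := by
        rw [logRatio_exp, logRatio_exp, ← div_sinh_abs a, ← div_sinh_abs b]
        exact strictAntiOn_div_sinh.sign_sub ha hb
    _ = SignType.sign ((b - a) * (a + b)) := by
      rw [← (pow_left_strictMonoOn₀ two_ne_zero).sign_sub (abs_nonneg b) (abs_nonneg a),
        sq_abs, sq_abs]
      ring_nf
    _ = SignType.sign ((exp b - exp a) * (exp a * exp b - 1)) := by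
      rw [sign_mul, sign_mul, hexp.sign_sub (mem_univ b) (mem_univ a), ← exp_add, ← exp_zero,
        hexp.sign_sub (mem_univ _) (mem_univ _), sub_zero]

theorem sign_logRatio_sub_of_neg_of_pos {r s : ℝ} (hr : r < 0) (hs : 0 < s) (hr1 : r ≠ -1)
    (hs1 : s ≠ 1) : SignType.sign (logRatio r - logRatio s) =
      SignType.sign ((s - r) * (r * s - 1)) := by
  have hgr : logRatio r < 0 := by
    have := logRatio_pos (neg_pos.2 hr) (by contrapose! hr1; linarith)
    rwa [logRatio_neg, neg_pos] at this
  have hgs := logRatio_pos hs hs1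
  rw [sign_neg (by linarith), sign_neg (mul_neg_of_pos_of_neg (by linarith) (by nlinarith))]

theorem sign_logRatio_sub {r s : ℝ} (hr0 : r ≠ 0) (hs0 : s ≠ 0) (hr1 : r ≠ 1) (hr2 : r ≠ -1)
    (hs1 : s ≠ 1) (hs2 : s ≠ -1) : SignType.sign (logRatio r - logRatio s) =
      SignType.sign ((s - r) * (r * s - 1)) := by
  rcases hr0.lt_or_gt with hr | hr <;> rcases hs0.lt_or_gt with hs | hs
  · have h := sign_logRatio_sub_of_pos (neg_pos.2 hr) (neg_pos.2 hs)
      (by contrapose! hr2; linarith) (by contrapose! hs2; linarith)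
    rw [logRatio_neg, logRatio_neg] at h
    rw [← neg_inj, ← Left.sign_neg, ← Left.sign_neg]
    convert h using 2 <;> ring
  · exact sign_logRatio_sub_of_neg_of_pos hr hs hr2 hs1
  · have h := sign_logRatio_sub_of_neg_of_pos hs hr hs2 hr1
    rw [← neg_inj, ← Left.sign_neg, ← Left.sign_neg]
    convert h using 2 <;> ring
  · exact sign_logRatio_sub_of_pos hr hs hr1 hs1

theorem phi_zero : Phi 0 = 0 := by simp [Phi]

theorem phiTilde_zero : PhiTilde 0 = 0 := by simp [PhiTilde]

theorem phiTilde_pos {s : ℝ} (hs0 : s ≠ 0) (hs1 : s ≠ 1) (hs2 : s ≠ -1) : 0 < PhiTilde s := by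
  have h := log_div_sub_one_pos (y := s ^ 2) (by positivity) (by simp [hs1, hs2])
  rw [PhiTilde, if_neg (not_or.2 ⟨hs1, hs2⟩)]
  calc (0 : ℝ) < (s ^ 2 + 1) / 2 * (log (s ^ 2) / (s ^ 2 - 1)) := mul_pos (by positivity) h
    _ = _ := by ring

theorem phi_mul_self {r : ℝ} (hr1 : r ≠ 1) (hr2 : r ≠ -1) :
    Phi (r * r) = PhiTilde r + PhiTilde r := by
  have hrr : r * r ≠ 1 := by simpa [← sq] using ⟨hr1, hr2⟩
  rw [Phi, PhiTilde, if_neg hrr, if_neg (not_or.2 ⟨hr1, hr2⟩), ← sq, log_pow]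
  push_cast
  ring

theorem phiTilde_add_phiTilde_sub_phi_mul {r s : ℝ} (hr0 : r ≠ 0) (hs0 : s ≠ 0) (hr1 : r ≠ 1)
    (hr2 : r ≠ -1) (hs1 : s ≠ 1) (hs2 : s ≠ -1) (hrs : r * s ≠ 1) :
    PhiTilde r + PhiTilde s - Phi (r * s) =
      (logRatio r - logRatio s) * ((s - r) * (r * s - 1)) / (r * s - 1) ^ 2 := by
  have hr : r ^ 2 - 1 ≠ 0 := by simp [sub_eq_zero, hr1, hr2]
  have hs : s ^ 2 - 1 ≠ 0 := by simp [sub_eq_zero, hs1, hs2]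
  have hrs' : r * s - 1 ≠ 0 := sub_ne_zero.2 hrs
  rw [PhiTilde, PhiTilde, Phi, if_neg hrs, if_neg (not_or.2 ⟨hr1, hr2⟩),
    if_neg (not_or.2 ⟨hs1, hs2⟩), mul_pow, log_mul (pow_ne_zero 2 hr0) (pow_ne_zero 2 hs0),
    logRatio, logRatio]
  field_simp
  ring

theorem phi_mul_lt_phiTilde_add {r s : ℝ} (hr1 : r ≠ 1) (hr2 : r ≠ -1) (hs1 : s ≠ 1)
    (hs2 : s ≠ -1) (hrs : r * s ≠ 1) (hne : r ≠ s) : Phi (r * s) < PhiTilde r + PhiTilde s := by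
  rcases eq_or_ne r 0 with rfl | hr0
  · simpa [phi_zero, phiTilde_zero] using phiTilde_pos hne.symm hs1 hs2
  rcases eq_or_ne s 0 with rfl | hs0
  · simpa [phi_zero, phiTilde_zero] using phiTilde_pos hne hr1 hr2
  rw [← sub_pos, phiTilde_add_phiTilde_sub_phi_mul hr0 hs0 hr1 hr2 hs1 hs2 hrs]
  have hrs' : r * s - 1 ≠ 0 := sub_ne_zero.2 hrs
  refine div_pos (mul_pos_of_sign_eq (sign_logRatio_sub hr0 hs0 hr1 hr2 hs1 hs2) ?_)
    (sq_pos_iff.2 hrs')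
  exact mul_ne_zero (sub_ne_zero.2 hne.symm) hrs'

/-- For real `r ≠ ±1`, `s ≠ ±1` with `r*s ≠ 1`, one has `Φ(rs) ≤ Φ̃(r) + Φ̃(s)`,
with equality if and only if `r = s`. -/
theorem phi_subadditive (r s : ℝ) (hr1 : r ≠ 1) (hr2 : r ≠ -1)
    (hs1 : s ≠ 1) (hs2 : s ≠ -1) (hrs : r * s ≠ 1) :
    Phi (r * s) ≤ PhiTilde r + PhiTilde s ∧
      (Phi (r * s) = PhiTilde r + PhiTilde s ↔ r = s) := by
  rcases eq_or_ne r s with rfl | hne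
  · have h := phi_mul_self hr1 hr2
    exact ⟨h.le, iff_of_true h rfl⟩
  · have h := phi_mul_lt_phiTilde_add hr1 hr2 hs1 hs2 hrs hne
    exact ⟨h.le, iff_of_false h.ne hne⟩
end

section
/- The function f(r) = (r/(r²-1))·log(r²), defined for real r with r² ≠ 1 (and extended by f(±1) = 1 via limits), is an odd function, satisfies f(1/r) = f(r) for r ≠ 0, is monotonically increasing on the interval (-1, 1), and is monotonically decreasing on (1, ∞). -/
/-!
Substituting `r = exp s` for `r > 0` turns `f` into `s / sinh s`. Since `sinh` is strictly convex
on `[0, ∞)` and vanishes at `0`, its secant slope `sinh s / s` strictly increases for `s > 0`, so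
`f` strictly decreases on `(1, ∞)`. The identity `f (1 / r) = f r` transports this to a strict
increase on `(0, 1)`, where `f > 0 = f 0`, and oddness extends it to `(-1, 1)`.
-/

open Real Set

/-- f(r) = (r/(r²-1))·log(r²), with f(0) = 0 and the limiting values f(±1) = 1. -/
noncomputable def fAux (r : ℝ) : ℝ :=
  if r = 1 ∨ r = -1 then 1 else (r / (r ^ 2 - 1)) * Real.log (r ^ 2)

theorem StrictMonoOn.Ioo_of_odd {α β : Type*} [AddCommGroup α] [LinearOrder α]
    [IsOrderedAddMonoid α] [AddCommGroup β] [PartialOrder β] [IsOrderedAddMonoid β]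
    {f : α → β} {a : α} (ha : 0 < a) (hodd : ∀ x ∈ Ico 0 a, f (-x) = -f x)
    (hf : StrictMonoOn f (Ico 0 a)) : StrictMonoOn f (Ioo (-a) a) := by
  have hneg : StrictMonoOn f (Ioc (-a) 0) := by
    intro x hx y hy hxy
    have hx' : -x ∈ Ico 0 a := ⟨neg_nonneg.2 hx.2, neg_lt.1 hx.1⟩
    have hy' : -y ∈ Ico 0 a := ⟨neg_nonneg.2 hy.2, neg_lt.1 hy.1⟩
    rw [← neg_neg x, ← neg_neg y, hodd _ hx', hodd _ hy']
    exact neg_lt_neg (hf hy' hx' (neg_lt_neg hxy))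
  rw [← Ioc_union_Ico_eq_Ioo (neg_neg_iff_pos.2 ha) ha]
  exact hneg.union hf ⟨right_mem_Ioc.2 (neg_neg_iff_pos.2 ha), fun _ h => h.2⟩
    ⟨left_mem_Ico.2 ha, fun _ h => h.1⟩

namespace Real

theorem strictConvexOn_sinh : StrictConvexOn ℝ (Ici 0) sinh :=
  strictConvexOn_of_deriv2_pos (convex_Ici 0) continuous_sinh.continuousOn fun x hx => by
    rw [interior_Ici] at hx
    simpa [deriv_sinh, deriv_cosh] using sinh_pos_iff.2 hx

theorem strictMonoOn_sinh_div_self : StrictMonoOn (fun s => sinh s / s) (Ioi 0) :=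
  fun x hx y hy hxy => by
    simpa using strictConvexOn_sinh.secant_strict_mono self_mem_Ici (mem_Ici.2 (le_of_lt hx))
      (mem_Ici.2 (le_of_lt hy)) (ne_of_gt hx) (ne_of_gt hy) hxy

theorem strictAntiOn_self_div_sinh : StrictAntiOn (fun s => s / sinh s) (Ioi 0) :=
  fun x hx y hy hxy => by
    have h := one_div_lt_one_div_of_lt (div_pos (sinh_pos_iff.2 hx) hx)
      (strictMonoOn_sinh_div_self hx hy hxy)
    simpa only [one_div_div] using h

end Real

theorem fAux_of_sq_ne_one {r : ℝ} (h : r ^ 2 ≠ 1) : fAux r = r / (r ^ 2 - 1) * log (r ^ 2) := by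
  rw [fAux, if_neg (sq_eq_one_iff.not.1 h)]

theorem fAux_neg {r : ℝ} (h1 : r ≠ 1) (h2 : r ≠ -1) : fAux (-r) = -fAux r := by
  have h : r ^ 2 ≠ 1 := sq_eq_one_iff.not.2 (not_or.2 ⟨h1, h2⟩)
  rw [fAux_of_sq_ne_one (by rwa [neg_sq]), fAux_of_sq_ne_one h, neg_sq]
  ring

theorem fAux_one_div (r : ℝ) : fAux (1 / r) = fAux r := by
  by_cases h : r ^ 2 = 1
  · rcases sq_eq_one_iff.1 h with rfl | rfl <;> norm_num
  have hr' : 1 - r ^ 2 ≠ 0 := sub_ne_zero.2 (Ne.symm h)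
  rw [fAux_of_sq_ne_one (by rwa [one_div, inv_pow, Ne, inv_eq_one]), fAux_of_sq_ne_one h,
    one_div, inv_pow, log_inv]
  rcases eq_or_ne r 0 with rfl | h0
  · simp
  field_simp
  ring

theorem fAux_eq_log_div_sinh_log {r : ℝ} (hr : 0 < r) (h1 : r ≠ 1) :
    fAux r = log r / sinh (log r) := by
  have h : r ^ 2 ≠ 1 := (pow_eq_one_iff_of_nonneg hr.le two_ne_zero).not.2 h1
  have hr2 : r ^ 2 - 1 ≠ 0 := sub_ne_zero.2 h
  rw [fAux_of_sq_ne_one h, sinh_log hr, log_pow]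
  field_simp
  ring

theorem fAux_strictAntiOn_Ioi_one : StrictAntiOn fAux (Ioi 1) := by
  have hlog : MapsTo log (Ioi 1) (Ioi 0) := fun _ h => log_pos h
  refine (strictAntiOn_self_div_sinh.comp_strictMonoOn
    (strictMonoOn_log.mono (Ioi_subset_Ioi zero_le_one)) hlog).congr fun r hr => ?_
  exact (fAux_eq_log_div_sinh_log (zero_lt_one.trans hr) (ne_of_gt hr)).symm

theorem fAux_strictMonoOn_Ioo_zero_one : StrictMonoOn fAux (Ioo 0 1) := by
  have hinv : MapsTo (fun r : ℝ => 1 / r) (Ioo 0 1) (Ioi 1) := fun _ h => one_lt_one_div h.1 h.2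
  have hinv_anti : StrictAntiOn (fun r : ℝ => 1 / r) (Ioo 0 1) :=
    (strictAntiOn_inv_pos.mono fun _ h => h.1).congr fun r _ => (one_div r).symm
  exact (fAux_strictAntiOn_Ioi_one.comp hinv_anti hinv).congr fun r _ => fAux_one_div r

theorem fAux_pos {r : ℝ} (h0 : 0 < r) (h1 : r < 1) : 0 < fAux r := by
  have hlog : log r < 0 := log_neg h0 h1
  rw [fAux_eq_log_div_sinh_log h0 (ne_of_lt h1)]
  exact div_pos_of_neg_of_neg hlog (sinh_neg_iff.2 hlog)

theorem fAux_strictMonoOn_Ico_zero_one : StrictMonoOn fAux (Ico 0 1) := by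
  rintro x ⟨hx0, hx1⟩ y ⟨-, hy1⟩ hxy
  rcases eq_or_lt_of_le hx0 with rfl | hx0
  · simpa [fAux] using fAux_pos hxy hy1
  · exact fAux_strictMonoOn_Ioo_zero_one ⟨hx0, hx1⟩ ⟨hx0.trans hxy, hy1⟩ hxy

/-- The function `f(r) = (r/(r²-1))·log(r²)` is odd (away from the extension points `±1`),
satisfies `f(1/r) = f(r)` for `r ≠ 0`, is strictly monotonically increasing on `(-1, 1)`
and strictly monotonically decreasing on `(1, ∞)`. -/
theorem fAux_properties :
    (∀ r : ℝ, r ≠ 1 → r ≠ -1 → fAux (-r) = -fAux r) ∧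
    (∀ r : ℝ, r ≠ 0 → fAux (1 / r) = fAux r) ∧
    StrictMonoOn fAux (Ioo (-1 : ℝ) 1) ∧
    StrictAntiOn fAux (Ioi (1 : ℝ)) :=
  ⟨fun _ h1 h2 => fAux_neg h1 h2, fun r _ => fAux_one_div r,
    StrictMonoOn.Ioo_of_odd one_pos (fun _ hx => fAux_neg (ne_of_lt hx.2) (by linarith [hx.1]))
      fAux_strictMonoOn_Ico_zero_one,
    fAux_strictAntiOn_Ioi_one⟩
end

section
/- Let A = diag(α₁,…,αₙ) be a diagonal complex n×n matrix and B = (bᵢⱼ) a complex n×n matrix, m ≥ 2. Then the trace of Q_A(B) = Σ_{p+q+r=m−2} Aᵖ B A^q B Aʳ equals Σ_{i,j} Δ(mx^{m−1})(αᵢ,αⱼ)/2 · bᵢⱼ·bⱼᵢ, i.e. Tr(Q_A(B)) = Σ_{i,j} ((m·αᵢ^{m−1} − m·αⱼ^{m−1})/(2(αᵢ−αⱼ)))·bᵢⱼ·bⱼᵢ, where for αᵢ = αⱼ the fraction is interpreted as (m(m−1)/2)·αᵢ^{m−2}. -/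
open Finset Matrix

lemma tri_comm (n : ℕ) (f : ℕ → ℕ → ℂ) :
    ∑ p ∈ Finset.range n, ∑ q ∈ Finset.range (n - p), f p q
      = ∑ q ∈ Finset.range n, ∑ p ∈ Finset.range (n - q), f p q := by
  rw [Finset.sum_sigma', Finset.sum_sigma']
  exact Finset.sum_nbij' (fun x => ⟨x.2, x.1⟩) (fun x => ⟨x.2, x.1⟩)
    (by simp [Finset.mem_sigma]; omega) (by simp [Finset.mem_sigma]; omega)
    (by simp) (by simp) (by simp)

lemma S_eq (k : ℕ) (x y : ℂ) :
    ∑ p ∈ Finset.range (k+1), ∑ q ∈ Finset.range (k+1-p), x^p * y^q * x^(k-p-q)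
      = ∑ q ∈ Finset.range (k+1), ((k+1-q : ℕ) : ℂ) * (x^(k-q) * y^q) := by
  rw [tri_comm]
  refine Finset.sum_congr rfl fun q hq => ?_
  rw [Finset.mem_range] at hq
  rw [Finset.sum_congr rfl (fun p hp => show x^p * y^q * x^(k-p-q) = x^(k-q) * y^q by
      rw [Finset.mem_range] at hp
      rw [mul_right_comm, ← pow_add, show p + (k-p-q) = k - q by omega]),
    Finset.sum_const, Finset.card_range, nsmul_eq_mul]

lemma key (k : ℕ) (x y : ℂ) :
    (∑ p ∈ Finset.range (k+1), ∑ q ∈ Finset.range (k+1-p), x^p * y^q * x^(k-p-q))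
    + (∑ p ∈ Finset.range (k+1), ∑ q ∈ Finset.range (k+1-p), y^p * x^q * y^(k-p-q))
    = 2 * (if x = y then (((k+2 : ℕ) : ℂ) * (((k+2 : ℕ) : ℂ) - 1) / 2) * x ^ k
        else (((k+2 : ℕ) : ℂ) * x ^ (k+1) - ((k+2 : ℕ) : ℂ) * y ^ (k+1)) / (2 * (x - y))) := by
  rw [S_eq, S_eq]
  have h2 : ∑ q ∈ Finset.range (k+1), ((k+1-q : ℕ) : ℂ) * (y^(k-q) * x^q)
      = ∑ q ∈ Finset.range (k+1), ((q+1 : ℕ) : ℂ) * (x^(k-q) * y^q) := by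
    rw [← Finset.sum_range_reflect]
    refine Finset.sum_congr rfl fun q hq => ?_
    rw [Finset.mem_range] at hq
    rw [show k + 1 - 1 - q = k - q from by omega,
      show k + 1 - (k - q) = q + 1 from by omega, show k - (k - q) = q from by omega]
    ring
  rw [h2, ← Finset.sum_add_distrib]
  have h3 : ∀ q ∈ Finset.range (k+1),
      ((k+1-q : ℕ) : ℂ) * (x^(k-q) * y^q) + ((q+1 : ℕ) : ℂ) * (x^(k-q) * y^q)
        = ((k+2 : ℕ) : ℂ) * (x^(k-q) * y^q) := by
    intro q hq
    rw [Finset.mem_range] at hq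
    rw [← add_mul]
    congr 1
    push_cast [Nat.cast_sub (by omega : q ≤ k+1)]
    ring
  rw [Finset.sum_congr rfl h3, ← Finset.mul_sum]
  by_cases hxy : x = y
  · subst hxy
    simp only [if_pos rfl]
    have : ∀ q ∈ Finset.range (k+1), x^(k-q) * x^q = x^k := by
      intro q hq; rw [Finset.mem_range] at hq
      rw [← pow_add, show k - q + q = k from by omega]
    rw [Finset.sum_congr rfl this, Finset.sum_const, Finset.card_range, nsmul_eq_mul]
    push_cast
    ring
  · rw [if_neg hxy]
    have hG : (∑ q ∈ Finset.range (k+1), x^(k-q) * y^q) * (x - y) = x^(k+1) - y^(k+1) := by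
      rw [← geom_sum₂_mul]
      congr 1
      rw [← Finset.sum_range_reflect]
      refine Finset.sum_congr rfl fun q hq => ?_
      rw [Finset.mem_range] at hq
      rw [show k + 1 - 1 - q = k - q from by omega, show k - (k - q) = q from by omega]
    have hd : x - y ≠ 0 := sub_ne_zero_of_ne hxy
    rw [← mul_div_assoc, eq_div_iff (by
      refine mul_ne_zero two_ne_zero hd)]
    push_cast
    push_cast at hG
    linear_combination 2*(((k:ℂ)+2)) * hG

lemma trace_term (n : ℕ) (α : Fin n → ℂ) (B : Matrix (Fin n) (Fin n) ℂ) (a b c : ℕ) :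
    Matrix.trace ((Matrix.diagonal α) ^ a * B * (Matrix.diagonal α) ^ b * B *
        (Matrix.diagonal α) ^ c)
      = ∑ i : Fin n, ∑ j : Fin n, (α i ^ a * α j ^ b * α i ^ c) * (B i j * B j i) := by
  simp only [Matrix.diagonal_pow, Matrix.trace, Matrix.diag_apply, Matrix.mul_apply,
    Matrix.diagonal_apply, ite_mul, mul_ite, zero_mul, mul_zero, Finset.sum_ite_eq,
    Finset.sum_ite_eq', Finset.mem_univ, if_true, Pi.pow_apply, Finset.sum_mul, Finset.mul_sum]
  refine Finset.sum_congr rfl fun i _ => Finset.sum_congr rfl fun j _ => ?_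
  ring

/-- Let `A = diag(α₁,…,αₙ)`, `B = (bᵢⱼ)` complex `n×n` matrices and `m ≥ 2`.  Then the trace of
`Q_A(B) = Σ_{p+q+r=m−2} Aᵖ B A^q B Aʳ` equals
`Σ_{i,j} ((m·αᵢ^{m−1} − m·αⱼ^{m−1})/(2(αᵢ−αⱼ)))·bᵢⱼ·bⱼᵢ`, where for `αᵢ = αⱼ` the divided
difference of `g(x) = m x^{m-1}` is interpreted as `(m(m−1)/2)·αᵢ^{m−2}`. -/
theorem trace_QA (n m : ℕ) (hm : 2 ≤ m) (α : Fin n → ℂ)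
    (B : Matrix (Fin n) (Fin n) ℂ) :
    Matrix.trace (∑ p ∈ Finset.range (m - 1), ∑ q ∈ Finset.range (m - 1 - p),
        (Matrix.diagonal α) ^ p * B * (Matrix.diagonal α) ^ q * B *
          (Matrix.diagonal α) ^ (m - 2 - p - q)) =
      ∑ i : Fin n, ∑ j : Fin n,
        (if α i = α j then ((m : ℂ) * (m - 1) / 2) * α i ^ (m - 2)
          else ((m : ℂ) * α i ^ (m - 1) - (m : ℂ) * α j ^ (m - 1)) / (2 * (α i - α j)))
          * B i j * B j i := by
  obtain ⟨k, rfl⟩ : ∃ k, m = k + 2 := ⟨m - 2, by omega⟩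
  have e1 : k + 2 - 1 = k + 1 := by omega
  have e2 : k + 2 - 2 = k := by omega
  simp only [e1, e2]
  have step1 :
      Matrix.trace (∑ p ∈ Finset.range (k + 1), ∑ q ∈ Finset.range (k + 1 - p),
          (Matrix.diagonal α) ^ p * B * (Matrix.diagonal α) ^ q * B *
            (Matrix.diagonal α) ^ (k - p - q))
        = ∑ p ∈ Finset.range (k + 1), ∑ q ∈ Finset.range (k + 1 - p),
            ∑ i : Fin n, ∑ j : Fin n,
              (α i ^ p * α j ^ q * α i ^ (k - p - q)) * (B i j * B j i) := by
    simp only [Matrix.trace_sum]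
    exact Finset.sum_congr rfl fun p _ => Finset.sum_congr rfl fun q _ =>
      trace_term n α B p q (k - p - q)
  rw [step1]
  have step2 :
      (∑ p ∈ Finset.range (k + 1), ∑ q ∈ Finset.range (k + 1 - p),
          ∑ i : Fin n, ∑ j : Fin n,
            (α i ^ p * α j ^ q * α i ^ (k - p - q)) * (B i j * B j i))
        = ∑ i : Fin n, ∑ j : Fin n,
            (∑ p ∈ Finset.range (k + 1), ∑ q ∈ Finset.range (k + 1 - p),
              α i ^ p * α j ^ q * α i ^ (k - p - q)) * (B i j * B j i) := by
    calc (∑ p ∈ Finset.range (k + 1), ∑ q ∈ Finset.range (k + 1 - p),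
          ∑ i : Fin n, ∑ j : Fin n,
            (α i ^ p * α j ^ q * α i ^ (k - p - q)) * (B i j * B j i))
        = ∑ p ∈ Finset.range (k + 1), ∑ i : Fin n, ∑ j : Fin n,
            ∑ q ∈ Finset.range (k + 1 - p),
              (α i ^ p * α j ^ q * α i ^ (k - p - q)) * (B i j * B j i) := by
          refine Finset.sum_congr rfl fun p _ => ?_
          rw [Finset.sum_comm]
          exact Finset.sum_congr rfl fun i _ => Finset.sum_comm
      _ = ∑ i : Fin n, ∑ j : Fin n, ∑ p ∈ Finset.range (k + 1),
            ∑ q ∈ Finset.range (k + 1 - p),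
              (α i ^ p * α j ^ q * α i ^ (k - p - q)) * (B i j * B j i) := by
          rw [Finset.sum_comm]
          exact Finset.sum_congr rfl fun i _ => Finset.sum_comm
      _ = ∑ i : Fin n, ∑ j : Fin n,
            (∑ p ∈ Finset.range (k + 1), ∑ q ∈ Finset.range (k + 1 - p),
              α i ^ p * α j ^ q * α i ^ (k - p - q)) * (B i j * B j i) := by
          refine Finset.sum_congr rfl fun i _ => Finset.sum_congr rfl fun j _ => ?_
          rw [Finset.sum_mul]
          exact Finset.sum_congr rfl fun p _ => (Finset.sum_mul _ _ _).symm
  rw [step2]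
  set F : Fin n → Fin n → ℂ := fun i j =>
    (∑ p ∈ Finset.range (k + 1), ∑ q ∈ Finset.range (k + 1 - p),
      α i ^ p * α j ^ q * α i ^ (k - p - q)) * (B i j * B j i) with hF
  set c : Fin n → Fin n → ℂ := fun i j =>
    (if α i = α j then ((↑(k + 2) : ℂ) * ((↑(k + 2) : ℂ) - 1) / 2) * α i ^ k
      else ((↑(k + 2) : ℂ) * α i ^ (k + 1) - (↑(k + 2) : ℂ) * α j ^ (k + 1)) /
        (2 * (α i - α j))) with hc
  show ∑ i : Fin n, ∑ j : Fin n, F i j = ∑ i : Fin n, ∑ j : Fin n, c i j * B i j * B j i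
  have hsym : ∑ i : Fin n, ∑ j : Fin n, F i j = ∑ i : Fin n, ∑ j : Fin n, F j i :=
    Finset.sum_comm
  have h2 : (2 : ℂ) * ∑ i : Fin n, ∑ j : Fin n, F i j
      = (2 : ℂ) * ∑ i : Fin n, ∑ j : Fin n, c i j * B i j * B j i := by
    calc (2 : ℂ) * ∑ i : Fin n, ∑ j : Fin n, F i j
        = (∑ i : Fin n, ∑ j : Fin n, F i j) + ∑ i : Fin n, ∑ j : Fin n, F j i := by
          rw [← hsym]; ring
      _ = ∑ i : Fin n, ∑ j : Fin n, (F i j + F j i) := by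
          rw [← Finset.sum_add_distrib]
          exact Finset.sum_congr rfl fun i _ => (Finset.sum_add_distrib).symm
      _ = ∑ i : Fin n, ∑ j : Fin n, 2 * (c i j * B i j * B j i) := by
          refine Finset.sum_congr rfl fun i _ => Finset.sum_congr rfl fun j _ => ?_
          have hk := key k (α i) (α j)
          simp only [hF, hc]
          linear_combination (B i j * B j i) * hk
      _ = (2 : ℂ) * ∑ i : Fin n, ∑ j : Fin n, c i j * B i j * B j i := by
          rw [Finset.mul_sum]
          exact Finset.sum_congr rfl fun i _ => (Finset.mul_sum _ _ _).symm
  exact mul_left_cancel₀ two_ne_zero h2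
end

section
/- Let K₁ ⊆ ℂ^{n₁×n₁} and K₂ ⊆ ℂ^{n₂×n₂} be subspaces of matrices, x⁽¹⁾ ∈ K₁ and x⁽²⁾ ∈ K₂ critical points of the entanglement entropy E (i.e., Tr(x⁽ⁱ⁾ y* · log(x⁽ⁱ⁾x⁽ⁱ⁾*)) = 0 for all y ∈ Kᵢ with Tr(x⁽ⁱ⁾y*) = 0, assuming x⁽ⁱ⁾x⁽ⁱ⁾* positive definite). Then x⁽¹⁾ ⊗ x⁽²⁾ is a critical point of E in K₁ ⊗ K₂: Tr((x⁽¹⁾⊗x⁽²⁾)y* · log((x⁽¹⁾x⁽¹⁾*)⊗(x⁽²⁾x⁽²⁾*))) = 0 for all y ∈ K₁⊗K₂ with Tr((x⁽¹⁾⊗x⁽²⁾)y*) = 0. -/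
open Matrix Kronecker
open scoped ComplexOrder

variable {n : Type*} [Fintype n] [DecidableEq n]

/-- Matrix logarithm of a Hermitian matrix via its spectral decomposition. -/
noncomputable def matLog (A : Matrix n n ℂ) : Matrix n n ℂ :=
  if hA : A.IsHermitian then
    (hA.eigenvectorUnitary : Matrix n n ℂ) *
      Matrix.diagonal (fun i => (Real.log (hA.eigenvalues i) : ℂ)) *
        (hA.eigenvectorUnitary : Matrix n n ℂ)ᴴ
  else 0

/-- `x` is a critical point of the entanglement entropy in the subspace `K`:
`Tr(x y* log(xx*)) = 0` for every `y ∈ K` Hilbert–Schmidt-orthogonal to `x`. -/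
def IsCriticalIn (K : Submodule ℂ (Matrix n n ℂ)) (x : Matrix n n ℂ) : Prop :=
  ∀ y ∈ K, Matrix.trace (x * yᴴ) = 0 →
    Matrix.trace (x * yᴴ * matLog (x * xᴴ)) = 0

/-- The tensor (Kronecker) product of two subspaces of matrices. -/
noncomputable def tensorSubspace {n₁ n₂ : ℕ} (K₁ : Submodule ℂ (Matrix (Fin n₁) (Fin n₁) ℂ))
    (K₂ : Submodule ℂ (Matrix (Fin n₂) (Fin n₂) ℂ)) :
    Submodule ℂ (Matrix (Fin n₁ × Fin n₂) (Fin n₁ × Fin n₂) ℂ) :=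
  Submodule.span ℂ {z | ∃ a ∈ K₁, ∃ b ∈ K₂, z = a ⊗ₖ b}

/-!
Criticality of `x` in `K` says that on `K` the two conjugate-linear functionals
`a ↦ Tr(x a* log xx*)` and `a ↦ Tr(x a*)` are proportional, the ratio being
`Tr(xx* log xx*) / Tr(xx*)` (stated below multiplied out, so that no division occurs).
Since `log((x₁x₁*) ⊗ (x₂x₂*)) = log(x₁x₁*) ⊗ 1 + 1 ⊗ log(x₂x₂*)`, on a product `a ⊗ b` the first
functional for `x₁ ⊗ x₂` is a sum of products of the one-party functionals, hence again
proportional to `Tr((x₁ ⊗ x₂)(a ⊗ b)*)`; by linearity this persists on all of `K₁ ⊗ K₂`.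

The logarithm identity holds because `matLog` may be computed from any unitary diagonalization:
on a Hermitian matrix it agrees with a polynomial interpolating `log` on the spectrum.
-/

open Polynomial Unitary

section

variable {m : Type*} [Fintype m] [DecidableEq m]

theorem aeval_diagonal {R : Type*} [CommSemiring R] (d : n → R) (p : R[X]) :
    aeval (diagonal d) p = diagonal fun i => eval (d i) p := by
  rw [← diagonalAlgHom_apply (R := R), aeval_algHom_apply, diagonalAlgHom_apply, aeval_pi_apply]
  simp only [coe_aeval_eq_eval]

theorem aeval_conjStarAlgAut_diagonal (U : unitary (Matrix n n ℂ)) (d : n → ℂ) (p : ℂ[X]) :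
    aeval (conjStarAlgAut ℂ _ U (diagonal d)) p =
      conjStarAlgAut ℂ _ U (diagonal fun i => eval (d i) p) := by
  rw [aeval_algHom_apply, aeval_diagonal]

theorem exists_polynomial_eval_ofReal_eq (s : Finset ℝ) (f : ℝ → ℝ) :
    ∃ p : ℂ[X], ∀ t ∈ s, eval (t : ℂ) p = f t :=
  ⟨Lagrange.interpolate s (fun t : ℝ => (t : ℂ)) fun t => (f t : ℂ), fun _ ht =>
    Lagrange.eval_interpolate_at_node _ Complex.ofReal_injective.injOn ht⟩

theorem matLog_conjStarAlgAut_diagonal (U : unitary (Matrix n n ℂ)) (d : n → ℝ) :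
    matLog (conjStarAlgAut ℂ _ U (diagonal ((↑) ∘ d))) =
      conjStarAlgAut ℂ _ U (diagonal ((↑) ∘ Real.log ∘ d)) := by
  set A := conjStarAlgAut ℂ _ U (diagonal ((↑) ∘ d))
  have hA : A.IsHermitian :=
    ((isHermitian_diagonal_of_self_adjoint _ (by ext; simp)).isSelfAdjoint).map _
  obtain ⟨p, hp⟩ := exists_polynomial_eval_ofReal_eq
    (Finset.univ.image hA.eigenvalues ∪ Finset.univ.image d) Real.log
  calc matLog A = aeval A p := by
        conv_rhs => rw [hA.spectral_theorem]
        rw [aeval_conjStarAlgAut_diagonal, matLog, dif_pos hA, conjStarAlgAut_apply]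
        congr
        ext i
        exact (hp _ (Finset.mem_union_left _ (Finset.mem_image_of_mem _ (Finset.mem_univ i)))).symm
    _ = _ := by
        rw [aeval_conjStarAlgAut_diagonal]
        congr
        ext i
        exact hp _ (Finset.mem_union_right _ (Finset.mem_image_of_mem _ (Finset.mem_univ i)))

theorem conjStarAlgAut_kronecker (U : unitary (Matrix n n ℂ)) (V : unitary (Matrix m m ℂ))
    (X : Matrix n n ℂ) (Y : Matrix m m ℂ) :
    conjStarAlgAut ℂ (Matrix (n × m) (n × m) ℂ)
        ⟨(U : Matrix n n ℂ) ⊗ₖ (V : Matrix m m ℂ), kronecker_mem_unitary U.2 V.2⟩ (X ⊗ₖ Y) =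
      conjStarAlgAut ℂ _ U X ⊗ₖ conjStarAlgAut ℂ _ V Y := by
  simp only [conjStarAlgAut_apply, star_eq_conjTranspose, conjTranspose_kronecker,
    mul_kronecker_mul]

theorem matLog_conjStarAlgAut_diagonal_kronecker (U : unitary (Matrix n n ℂ))
    (V : unitary (Matrix m m ℂ)) {d : n → ℝ} {e : m → ℝ} (hd : ∀ i, d i ≠ 0) (he : ∀ j, e j ≠ 0) :
    matLog (conjStarAlgAut ℂ _ U (diagonal ((↑) ∘ d)) ⊗ₖ conjStarAlgAut ℂ _ V (diagonal ((↑) ∘ e)))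
      = matLog (conjStarAlgAut ℂ _ U (diagonal ((↑) ∘ d))) ⊗ₖ 1 +
          1 ⊗ₖ matLog (conjStarAlgAut ℂ _ V (diagonal ((↑) ∘ e))) := by
  have hlog : diagonal (Complex.ofReal ∘ Real.log ∘ fun ij : n × m => d ij.1 * e ij.2) =
      diagonal ((↑) ∘ Real.log ∘ d) ⊗ₖ 1 + 1 ⊗ₖ diagonal ((↑) ∘ Real.log ∘ e) := by
    rw [← diagonal_one, ← diagonal_one, diagonal_kronecker_diagonal, diagonal_kronecker_diagonal,
      diagonal_add]
    congr 1
    ext ij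
    simp [Real.log_mul (hd ij.1) (he ij.2)]
  have hprod : (diagonal fun ij : n × m => ((↑) ∘ d) ij.1 * ((↑) ∘ e) ij.2 : Matrix _ _ ℂ) =
      diagonal ((↑) ∘ fun ij : n × m => d ij.1 * e ij.2) := by
    simp [Function.comp_def]
  rw [← conjStarAlgAut_kronecker, diagonal_kronecker_diagonal, hprod,
    matLog_conjStarAlgAut_diagonal, hlog, map_add, conjStarAlgAut_kronecker,
    conjStarAlgAut_kronecker, map_one, map_one, matLog_conjStarAlgAut_diagonal,
    matLog_conjStarAlgAut_diagonal]

theorem matLog_kronecker {A : Matrix n n ℂ} {B : Matrix m m ℂ} (hA : A.PosDef) (hB : B.PosDef) :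
    matLog (A ⊗ₖ B) = matLog A ⊗ₖ 1 + 1 ⊗ₖ matLog B := by
  rw [hA.1.spectral_theorem, hB.1.spectral_theorem]
  exact matLog_conjStarAlgAut_diagonal_kronecker _ _ (fun i => (hA.eigenvalues_pos i).ne')
    (fun j => (hB.eigenvalues_pos j).ne')

theorem IsCriticalIn.trace_mul_trace_matLog {K : Submodule ℂ (Matrix n n ℂ)} {x a : Matrix n n ℂ}
    (hc : IsCriticalIn K x) (hxK : x ∈ K) (haK : a ∈ K) :
    trace (x * xᴴ) * trace (x * aᴴ * matLog (x * xᴴ)) =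
      trace (x * xᴴ * matLog (x * xᴴ)) * trace (x * aᴴ) := by
  -- `a` minus its Hilbert–Schmidt projection onto `x`, scaled by `Tr(x xᴴ)`
  have horth : trace (x * (star (trace (x * xᴴ)) • a - star (trace (x * aᴴ)) • x)ᴴ) = 0 := by
    simp only [conjTranspose_sub, conjTranspose_smul, star_star, mul_sub, Matrix.mul_smul,
      trace_sub, trace_smul, smul_eq_mul]
    ring
  have h := hc _ (K.sub_mem (K.smul_mem _ haK) (K.smul_mem _ hxK)) horth
  simp only [conjTranspose_sub, conjTranspose_smul, star_star, mul_sub, sub_mul, Matrix.mul_smul,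
    Matrix.smul_mul, trace_sub, trace_smul, smul_eq_mul] at h
  linear_combination h

theorem trace_kronecker_mul_kroneckerSum (x a L : Matrix n n ℂ) (y b M : Matrix m m ℂ) :
    trace ((x ⊗ₖ y) * (a ⊗ₖ b)ᴴ * (L ⊗ₖ 1 + 1 ⊗ₖ M)) =
      trace (x * aᴴ * L) * trace (y * bᴴ) + trace (x * aᴴ) * trace (y * bᴴ * M) := by
  rw [conjTranspose_kronecker, ← mul_kronecker_mul, mul_add, ← mul_kronecker_mul,
    ← mul_kronecker_mul, trace_add, trace_kronecker, trace_kronecker, mul_one, mul_one]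

theorem IsCriticalIn.trace_mul_trace_kronecker {n₁ n₂ : ℕ}
    {K₁ : Submodule ℂ (Matrix (Fin n₁) (Fin n₁) ℂ)} {K₂ : Submodule ℂ (Matrix (Fin n₂) (Fin n₂) ℂ)}
    {x₁ : Matrix (Fin n₁) (Fin n₁) ℂ} {x₂ : Matrix (Fin n₂) (Fin n₂) ℂ}
    (hc₁ : IsCriticalIn K₁ x₁) (hc₂ : IsCriticalIn K₂ x₂) (hx₁K : x₁ ∈ K₁) (hx₂K : x₂ ∈ K₂)
    {z : Matrix (Fin n₁ × Fin n₂) (Fin n₁ × Fin n₂) ℂ} (hz : z ∈ tensorSubspace K₁ K₂) :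
    trace (x₁ * x₁ᴴ) * trace (x₂ * x₂ᴴ) *
        trace ((x₁ ⊗ₖ x₂) * zᴴ * (matLog (x₁ * x₁ᴴ) ⊗ₖ 1 + 1 ⊗ₖ matLog (x₂ * x₂ᴴ))) =
      (trace (x₁ * x₁ᴴ * matLog (x₁ * x₁ᴴ)) * trace (x₂ * x₂ᴴ) +
        trace (x₁ * x₁ᴴ) * trace (x₂ * x₂ᴴ * matLog (x₂ * x₂ᴴ))) * trace ((x₁ ⊗ₖ x₂) * zᴴ) := by
  induction hz using Submodule.span_induction with
  | mem z hz =>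
    obtain ⟨a, haK, b, hbK, rfl⟩ := hz
    rw [trace_kronecker_mul_kroneckerSum, conjTranspose_kronecker, ← mul_kronecker_mul,
      trace_kronecker]
    linear_combination (trace (x₂ * x₂ᴴ) * trace (x₂ * bᴴ)) * hc₁.trace_mul_trace_matLog hx₁K haK
      + (trace (x₁ * x₁ᴴ) * trace (x₁ * aᴴ)) * hc₂.trace_mul_trace_matLog hx₂K hbK
  | zero => simp
  | add u v _ _ hu hv =>
    rw [conjTranspose_add, mul_add (x₁ ⊗ₖ x₂), add_mul, trace_add, trace_add]
    linear_combination hu + hv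
  | smul r u _ hu =>
    simp only [conjTranspose_smul, Matrix.mul_smul, Matrix.smul_mul, trace_smul, smul_eq_mul]
    linear_combination star r * hu

end

/-- If `x⁽¹⁾` and `x⁽²⁾` are critical points of the entanglement entropy in `K₁` and `K₂`
(with `x⁽ⁱ⁾x⁽ⁱ⁾*` positive definite), then `x⁽¹⁾ ⊗ x⁽²⁾` is a critical point in `K₁ ⊗ K₂`. -/
theorem critical_tensor_critical {n₁ n₂ : ℕ}
    (K₁ : Submodule ℂ (Matrix (Fin n₁) (Fin n₁) ℂ))
    (K₂ : Submodule ℂ (Matrix (Fin n₂) (Fin n₂) ℂ))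
    (x₁ : Matrix (Fin n₁) (Fin n₁) ℂ) (x₂ : Matrix (Fin n₂) (Fin n₂) ℂ)
    (hx₁K : x₁ ∈ K₁) (hx₂K : x₂ ∈ K₂)
    (hx₁ : (x₁ * x₁ᴴ).PosDef) (hx₂ : (x₂ * x₂ᴴ).PosDef)
    (hc₁ : IsCriticalIn K₁ x₁) (hc₂ : IsCriticalIn K₂ x₂) :
    IsCriticalIn (tensorSubspace K₁ K₂) (x₁ ⊗ₖ x₂) := by
  intro y hy hyorth
  have hlog : matLog ((x₁ ⊗ₖ x₂) * (x₁ ⊗ₖ x₂)ᴴ) =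
      matLog (x₁ * x₁ᴴ) ⊗ₖ 1 + 1 ⊗ₖ matLog (x₂ * x₂ᴴ) := by
    rw [conjTranspose_kronecker, ← mul_kronecker_mul, matLog_kronecker hx₁ hx₂]
  have h := hc₁.trace_mul_trace_kronecker hc₂ hx₁K hx₂K hy
  rw [hyorth, mul_zero, ← hlog] at h
  rcases mul_eq_zero.1 h with h | h
  · rcases mul_eq_zero.1 h with h | h <;> simp [trace_mul_conjTranspose_self_eq_zero_iff.1 h]
  · exact h
end
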